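/- For a connected graph Σ with at least two vertices and diameter d, the diameter of the subdivision graph S(Σ) equals 2d + δ for some δ ∈ {0, 1, 2}. -/

import Mathlib

open SimpleGraph

/-- The subdivision graph of a simple graph `S`: vertex set `V ⊕ E(S)`,
with `x ∈ V` adjacent to `e ∈ E(S)` iff `x ∈ e`. -/
def subdiv {V : Type*} (S : SimpleGraph V) : SimpleGraph (V ⊕ S.edgeSet) where
  Adj a b :=
    (∃ (x : V) (e : S.edgeSet), a = Sum.inl x ∧ b = Sum.inr e ∧ x ∈ (e : Sym2 V)) ∨
    (∃ (x : V) (e : S.edgeSet), b = Sum.inl x ∧ a = Sum.inr e ∧ x ∈ (e : Sym2 V))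
  symm := ⟨fun a b h => h.elim (fun ⟨x, e, h1, h2, h3⟩ => Or.inr ⟨x, e, h1, h2, h3⟩)
    (fun ⟨x, e, h1, h2, h3⟩ => Or.inl ⟨x, e, h1, h2, h3⟩)⟩
  loopless := ⟨by
    rintro a (⟨x, e, h1, h2, _⟩ | ⟨x, e, h1, h2, _⟩) <;> rw [h1] at h2 <;>
      exact Sum.inl_ne_inr h2⟩

section Aux

variable {V : Type*} {S : SimpleGraph V}

lemma subdiv_adj_inl_inr {x : V} {e : S.edgeSet} (h : x ∈ (e : Sym2 V)) :
    (subdiv S).Adj (Sum.inl x) (Sum.inr e) :=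
  Or.inl ⟨x, e, rfl, rfl, h⟩

/-- Lifting a walk of `S` to a walk of the subdivision graph of twice the length. -/
lemma subdiv_walk_up {u v : V} (p : S.Walk u v) :
    ∃ q : (subdiv S).Walk (Sum.inl u) (Sum.inl v), q.length = 2 * p.length := by
  induction p with
  | nil => exact ⟨.nil, rfl⟩
  | @cons a b c h p ih =>
    obtain ⟨q, hq⟩ := ih
    refine ⟨.cons (subdiv_adj_inl_inr (e := ⟨s(a, b), h⟩) (by simp))
      (.cons ((subdiv_adj_inl_inr (e := ⟨s(a, b), h⟩) (by simp)).symm) q), ?_⟩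
    simp [hq]; ring

lemma subdiv_walk_down (hconn : S.Connected) :
    ∀ n, ∀ {u v : V} (q : (subdiv S).Walk (Sum.inl u) (Sum.inl v)),
      q.length = n → 2 * S.dist u v ≤ n := by
  intro n
  induction n using Nat.strong_induction_on with
  | _ n ih =>
    intro u v q hq
    cases q with
    | nil => subst hq; simp [SimpleGraph.dist_self]
    | @cons _ b _ h q' =>
      obtain ⟨e, hb, hu⟩ : ∃ e : S.edgeSet, b = Sum.inr e ∧ u ∈ (e : Sym2 V) := by
        rcases h with ⟨x, e, hx, hb, hm⟩ | ⟨x, e, hx, hb, hm⟩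
        · rw [Sum.inl.injEq] at hx
          subst hx
          exact ⟨e, hb, hm⟩
        · exact absurd hb (by simp)
      subst hb
      cases q' with
      | @cons _ c _ h2 q'' =>
        obtain ⟨w, hc, hw⟩ : ∃ w : V, c = Sum.inl w ∧ w ∈ (e : Sym2 V) := by
          rcases h2 with ⟨x, e', hx, hb, hm⟩ | ⟨x, e', hx, hb, hm⟩
          · exact absurd hx (by simp)
          · refine ⟨x, hx, ?_⟩
            rw [Sum.inr.injEq] at hb
            cases hb; exact hm
        subst hc
        have hlt : q''.length < n := by simp [Walk.length_cons] at hq; omega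
        have hrec := ih q''.length hlt q'' rfl
        have hstep : S.dist u v ≤ S.dist w v + 1 := by
          by_cases huw : u = w
          · subst huw; omega
          · have hadj : S.Adj u w := by
              have hE := e.2
              rw [(Sym2.mem_and_mem_iff huw).mp ⟨hu, hw⟩] at hE
              exact hE
            calc S.dist u v ≤ S.dist u w + S.dist w v := hconn.dist_triangle
              _ = 1 + S.dist w v := by rw [SimpleGraph.dist_eq_one_iff_adj.mpr hadj]
              _ = S.dist w v + 1 := by ring
        simp [Walk.length_cons] at hq
        omega

lemma subdiv_connected (hconn : S.Connected) [Nonempty V] : (subdiv S).Connected := by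
  rw [connected_iff_exists_forall_reachable]
  obtain ⟨u⟩ := ‹Nonempty V›
  refine ⟨Sum.inl u, ?_⟩
  rintro (v | e)
  · obtain ⟨p⟩ := hconn u v
    obtain ⟨q, _⟩ := subdiv_walk_up p
    exact ⟨q⟩
  · have hx : (e : Sym2 V).out.1 ∈ (e : Sym2 V) := Sym2.out_fst_mem _
    obtain ⟨p⟩ := hconn u (e : Sym2 V).out.1
    obtain ⟨q, _⟩ := subdiv_walk_up p
    exact ⟨q.concat (subdiv_adj_inl_inr hx)⟩

lemma subdiv_dist_inl_inl (hconn : S.Connected) (u v : V) :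
    (subdiv S).dist (Sum.inl u) (Sum.inl v) = 2 * S.dist u v := by
  obtain ⟨p, hp⟩ := hconn.exists_walk_length_eq_dist u v
  obtain ⟨q, hq⟩ := subdiv_walk_up p
  have h1 : (subdiv S).dist (Sum.inl u) (Sum.inl v) ≤ 2 * S.dist u v := by
    rw [← hp, ← hq]; exact SimpleGraph.dist_le q
  have hr : (subdiv S).Reachable (Sum.inl u) (Sum.inl v) := ⟨q⟩
  obtain ⟨q', hq'⟩ := hr.exists_walk_length_eq_dist
  have h2 := subdiv_walk_down hconn q'.length q' rfl
  omega

lemma connected_ediam_ne_top {α : Type*} [Nonempty α] [Finite α] {G : SimpleGraph α}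
    (h : G.Connected) : G.ediam ≠ ⊤ := by
  obtain ⟨u, v, huv⟩ := SimpleGraph.exists_edist_eq_ediam_of_finite (G := G)
  rw [← huv]
  exact SimpleGraph.edist_ne_top_iff_reachable.mpr (h u v)

end Aux

/-- For a connected graph `S` with at least two vertices, the diameter of the subdivision
graph equals `2 * diam S + δ` for some `δ ∈ {0, 1, 2}`. -/
theorem stmt_5 {V : Type*} [Fintype V] (S : SimpleGraph V) (hconn : S.Connected)
    (hV : Nontrivial V) :
    ∃ δ ≤ 2, (subdiv S).diam = 2 * S.diam + δ := by
  have : Nonempty V := hV.to_nonempty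
  have hconn' : (subdiv S).Connected := subdiv_connected hconn
  have hS : S.ediam ≠ ⊤ := connected_ediam_ne_top hconn
  have hS' : (subdiv S).ediam ≠ ⊤ := connected_ediam_ne_top hconn'
  -- lower bound
  obtain ⟨u, v, huv⟩ := SimpleGraph.exists_dist_eq_diam (G := S)
  have hlow : 2 * S.diam ≤ (subdiv S).diam := by
    rw [← huv, ← subdiv_dist_inl_inl hconn]
    exact SimpleGraph.dist_le_diam hS'
  -- upper bound
  have hnear : ∀ a : V ⊕ S.edgeSet, ∃ x : V, (subdiv S).dist a (Sum.inl x) ≤ 1 := by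
    rintro (x | e)
    · exact ⟨x, by rw [SimpleGraph.dist_self]; omega⟩
    · refine ⟨(e : Sym2 V).out.1, ?_⟩
      have := (subdiv_adj_inl_inr (e := e) (Sym2.out_fst_mem (e : Sym2 V))).symm
      rw [SimpleGraph.dist_eq_one_iff_adj.mpr this]
  have hupp : (subdiv S).diam ≤ 2 * S.diam + 2 := by
    obtain ⟨a, b, hab⟩ := SimpleGraph.exists_dist_eq_diam (G := subdiv S)
    rw [← hab]
    obtain ⟨x, hx⟩ := hnear a
    obtain ⟨y, hy⟩ := hnear b
    have t1 : (subdiv S).dist a b ≤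
        (subdiv S).dist a (Sum.inl x) + (subdiv S).dist (Sum.inl x) b := hconn'.dist_triangle
    have t2 : (subdiv S).dist (Sum.inl x) b ≤
        (subdiv S).dist (Sum.inl x) (Sum.inl y) + (subdiv S).dist (Sum.inl y) b :=
      hconn'.dist_triangle
    have t3 : (subdiv S).dist (Sum.inl y) b ≤ 1 := by rwa [SimpleGraph.dist_comm]
    have t4 : (subdiv S).dist (Sum.inl x) (Sum.inl y) ≤ 2 * S.diam := by
      rw [subdiv_dist_inl_inl hconn]
      exact Nat.mul_le_mul_left 2 (SimpleGraph.dist_le_diam hS)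
    omega
  exact ⟨(subdiv S).diam - 2 * S.diam, by omega, by omega⟩
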